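/- Let q ≥ 1, let ξ ∈ L¹(ℝ^q) be measurable, let n ≥ 1 be a natural number, and let g ∈ L¹(ℝ^q). Define the sampling Kantorovich operator S_n(g)(x) = n^q ∑_{k ∈ ℤ^q} ξ(n x − k) ∫_{D_k^n} g(u) du, where D_k^n = ∏_{j=1}^{q} [k_j/n, (k_j+1)/n). Then S_n(g) ∈ L¹(ℝ^q) and ‖S_n(g)‖_{L¹(ℝ^q)} ≤ ‖ξ‖_{L¹(ℝ^q)} ‖g‖_{L¹(ℝ^q)}; in particular the constant L = ‖ξ‖_{L¹} depends only on the kernel ξ and not on n or g. -/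

import Mathlib

/-!
Pointwise, `|S_n g(x)| ≤ n^q ∑_k |ξ(n x − k)| |∫_{D_k^n} g|`. The change of variables
`y = n x − k` shows that the `k`-th term has `L¹` norm `n^{-q} ‖ξ‖₁ |∫_{D_k^n} g|`, and since the
cells `D_k^n` partition `ℝ^q`, `∑_k |∫_{D_k^n} g| ≤ ‖g‖₁`. So the series defining `S_n g` has
summable `L¹` norms, hence converges in `L¹`, and the factor `n^q` cancels `n^{-q}`.
-/

open MeasureTheory

/-- The cell `D_k^n = ∏_{j=1}^q [k_j/n, (k_j+1)/n)` of the uniform grid of step `1/n`. -/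
def cell (q n : ℕ) (k : Fin q → ℤ) : Set (EuclideanSpace ℝ (Fin q)) :=
  WithLp.ofLp ⁻¹' Set.univ.pi fun j => Set.Ico ((k j : ℝ) / n) (((k j : ℝ) + 1) / n)

/-- The sampling Kantorovich operator
`S_n(f)(x) = n^q ∑_{k ∈ ℤ^q} ξ(n x − k) ∫_{D_k^n} f(u) du`. -/
noncomputable def SK (q : ℕ) (ξ : EuclideanSpace ℝ (Fin q) → ℝ) (n : ℕ)
    (f : EuclideanSpace ℝ (Fin q) → ℝ) (x : EuclideanSpace ℝ (Fin q)) : ℝ :=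
  (n : ℝ) ^ q * ∑' k : Fin q → ℤ,
    ξ (WithLp.toLp 2 fun j => (n : ℝ) * x j - (k j : ℝ)) * ∫ u in cell q n k, f u

namespace MeasureTheory

variable {α E : Type*} [MeasurableSpace α] {μ : Measure α} [NormedAddCommGroup E]
  {ι : Type*} {F : ι → α → E}

theorem tsum_lintegral_enorm_eq_ofReal (hF_int : ∀ i, Integrable (F i) μ)
    (hF_sum : Summable fun i => ∫ a, ‖F i a‖ ∂μ) :
    ∑' i, ∫⁻ a, ‖F i a‖ₑ ∂μ = ENNReal.ofReal (∑' i, ∫ a, ‖F i a‖ ∂μ) := by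
  rw [ENNReal.ofReal_tsum_of_nonneg (fun i => integral_nonneg fun a => norm_nonneg _) hF_sum]
  exact tsum_congr fun i => (ofReal_integral_norm_eq_lintegral_enorm (hF_int i)).symm

theorem lintegral_enorm_tsum_le [Countable ι] (hF_int : ∀ i, Integrable (F i) μ)
    (hF_sum : Summable fun i => ∫ a, ‖F i a‖ ∂μ) :
    ∫⁻ a, ‖∑' i, F i a‖ₑ ∂μ ≤ ENNReal.ofReal (∑' i, ∫ a, ‖F i a‖ ∂μ) :=
  calc ∫⁻ a, ‖∑' i, F i a‖ₑ ∂μ ≤ ∫⁻ a, ∑' i, ‖F i a‖ₑ ∂μ :=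
        lintegral_mono fun _ => enorm_tsum_le_tsum_enorm
    _ = ∑' i, ∫⁻ a, ‖F i a‖ₑ ∂μ := lintegral_tsum fun i => (hF_int i).1.enorm
    _ = _ := tsum_lintegral_enorm_eq_ofReal hF_int hF_sum

theorem integrable_tsum_of_summable_integral_norm [Countable ι] [CompleteSpace E]
    (hF_int : ∀ i, Integrable (F i) μ) (hF_sum : Summable fun i => ∫ a, ‖F i a‖ ∂μ) :
    Integrable (fun a => ∑' i, F i a) μ := by
  have h_summable : ∀ᵐ a ∂μ, Summable fun i => ‖F i a‖ := by
    refine summable_norm_of_tsum_eLpNorm_ne_top le_rfl (fun i => (hF_int i).1) ?_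
    simp_rw [eLpNorm_one_eq_lintegral_enorm, tsum_lintegral_enorm_eq_ofReal hF_int hF_sum]
    exact ENNReal.ofReal_ne_top
  refine ⟨aestronglyMeasurable_of_tendsto_ae Filter.atTop
    (fun s : Finset ι => s.aestronglyMeasurable_sum fun i _ => (hF_int i).1) ?_, ?_⟩
  · filter_upwards [h_summable] with a ha
    simp only [Finset.sum_apply]
    exact ha.of_norm.hasSum
  · exact (lintegral_enorm_tsum_le hF_int hF_sum).trans_lt ENNReal.ofReal_lt_top

theorem integral_norm_tsum_le_tsum_integral_norm [Countable ι] [CompleteSpace E]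
    (hF_int : ∀ i, Integrable (F i) μ) (hF_sum : Summable fun i => ∫ a, ‖F i a‖ ∂μ) :
    ∫ a, ‖∑' i, F i a‖ ∂μ ≤ ∑' i, ∫ a, ‖F i a‖ ∂μ := by
  rw [integral_norm_eq_lintegral_enorm
    (integrable_tsum_of_summable_integral_norm hF_int hF_sum).1]
  exact ENNReal.toReal_le_of_le_ofReal
    (tsum_nonneg fun i => integral_nonneg fun a => norm_nonneg _)
    (lintegral_enorm_tsum_le hF_int hF_sum)

end MeasureTheory

theorem MeasureTheory.Measure.integral_comp_smul_sub {E F : Type*} [NormedAddCommGroup E]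
    [NormedSpace ℝ E] [MeasurableSpace E] [BorelSpace E] [FiniteDimensional ℝ E] (μ : Measure E)
    [μ.IsAddHaarMeasure] [NormedAddCommGroup F] [NormedSpace ℝ F] (f : E → F) (R : ℝ) (v : E) :
    ∫ x, f (R • x - v) ∂μ = |(R ^ Module.finrank ℝ E)⁻¹| • ∫ x, f x ∂μ := by
  rw [Measure.integral_comp_smul μ (fun y => f (y - v)), integral_sub_right_eq_self]

section Cell

variable {q n : ℕ} {f : EuclideanSpace ℝ (Fin q) → ℝ}

theorem mem_cell_iff (hn : 0 < n) (x : EuclideanSpace ℝ (Fin q)) (k : Fin q → ℤ) :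
    x ∈ cell q n k ↔ ∀ j, ⌊(n : ℝ) * x j⌋ = k j := by
  have hn' : (0 : ℝ) < n := by exact_mod_cast hn
  simp only [cell, Set.mem_preimage, Set.mem_univ_pi, Set.mem_Ico]
  refine forall_congr' fun j => ?_
  rw [div_le_iff₀ hn', lt_div_iff₀ hn', Int.floor_eq_iff, mul_comm (n : ℝ)]

theorem measurableSet_cell (k : Fin q → ℤ) : MeasurableSet (cell q n k) :=
  (MeasurableSet.univ_pi fun _ => measurableSet_Ico).preimage (WithLp.measurable_ofLp _ _)

theorem pairwise_disjoint_cell (hn : 0 < n) : Pairwise (Function.onFun Disjoint (cell q n)) :=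
  fun k k' hkk' => Set.disjoint_left.2 fun x hx hx' => hkk' <| funext fun j =>
    ((mem_cell_iff hn x k).1 hx j).symm.trans ((mem_cell_iff hn x k').1 hx' j)

theorem iUnion_cell (hn : 0 < n) : ⋃ k, cell q n k = Set.univ :=
  Set.eq_univ_of_forall fun x =>
    Set.mem_iUnion.2 ⟨fun j => ⌊(n : ℝ) * x j⌋, (mem_cell_iff hn x _).2 fun _ => rfl⟩

theorem hasSum_integral_cell (hn : 0 < n) (hf : Integrable f) :
    HasSum (fun k => ∫ x in cell q n k, f x) (∫ x, f x) := by
  simpa only [iUnion_cell hn, Measure.restrict_univ] using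
    hasSum_integral_iUnion measurableSet_cell (pairwise_disjoint_cell hn)
      (by rw [iUnion_cell hn]; exact hf.integrableOn)

theorem summable_norm_integral_cell (hn : 0 < n) (hf : Integrable f) :
    Summable fun k => ‖∫ x in cell q n k, f x‖ :=
  (hasSum_integral_cell hn hf.norm).summable.of_nonneg_of_le (fun _ => norm_nonneg _)
    fun _ => norm_integral_le_integral_norm _

theorem tsum_norm_integral_cell_le (hn : 0 < n) (hf : Integrable f) :
    ∑' k, ‖∫ x in cell q n k, f x‖ ≤ ∫ x, ‖f x‖ :=
  hasSum_le (fun _ => norm_integral_le_integral_norm _)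
    (summable_norm_integral_cell hn hf).hasSum (hasSum_integral_cell hn hf.norm)

end Cell

noncomputable def skTerm (q : ℕ) (ξ : EuclideanSpace ℝ (Fin q) → ℝ) (n : ℕ)
    (f : EuclideanSpace ℝ (Fin q) → ℝ) (k : Fin q → ℤ) (x : EuclideanSpace ℝ (Fin q)) : ℝ :=
  ξ ((n : ℝ) • x - WithLp.toLp 2 fun j => (k j : ℝ)) * ∫ u in cell q n k, f u

section SamplingKantorovich

variable {q n : ℕ} {ξ f : EuclideanSpace ℝ (Fin q) → ℝ}

theorem SK_eq_tsum_skTerm : SK q ξ n f = fun x => (n : ℝ) ^ q * ∑' k, skTerm q ξ n f k x :=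
  rfl

theorem integrable_skTerm (hξ : Integrable ξ) (hn : 0 < n) (k : Fin q → ℤ) :
    Integrable (skTerm q ξ n f k) :=
  ((hξ.comp_sub_right _).comp_smul (Nat.cast_ne_zero.2 hn.ne')).mul_const _

theorem integral_norm_skTerm (k : Fin q → ℤ) :
    ∫ x, ‖skTerm q ξ n f k x‖ = ((n : ℝ) ^ q)⁻¹ * (∫ y, ‖ξ y‖) * ‖∫ u in cell q n k, f u‖ := by
  simp only [skTerm, norm_mul]
  rw [integral_mul_const, Measure.integral_comp_smul_sub volume (fun y => ‖ξ y‖),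
    finrank_euclideanSpace, Fintype.card_fin, abs_of_nonneg (by positivity), smul_eq_mul]

theorem summable_integral_norm_skTerm (hn : 0 < n) (hf : Integrable f) :
    Summable fun k => ∫ x, ‖skTerm q ξ n f k x‖ := by
  simp_rw [integral_norm_skTerm]
  exact (summable_norm_integral_cell hn hf).mul_left _

theorem tsum_integral_norm_skTerm_le (hn : 0 < n) (hf : Integrable f) :
    ∑' k, ∫ x, ‖skTerm q ξ n f k x‖ ≤ ((n : ℝ) ^ q)⁻¹ * (∫ y, ‖ξ y‖) * ∫ x, ‖f x‖ := by
  simp_rw [integral_norm_skTerm, tsum_mul_left]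
  gcongr
  exact tsum_norm_integral_cell_le hn hf

theorem integrable_SK (hξ : Integrable ξ) (hn : 0 < n) (hf : Integrable f) :
    Integrable (SK q ξ n f) :=
  (integrable_tsum_of_summable_integral_norm (integrable_skTerm hξ hn)
    (summable_integral_norm_skTerm hn hf)).const_mul _

theorem integral_norm_SK_le (hξ : Integrable ξ) (hn : 0 < n) (hf : Integrable f) :
    ∫ x, ‖SK q ξ n f x‖ ≤ (∫ x, ‖ξ x‖) * ∫ x, ‖f x‖ := by
  have hnq : (0 : ℝ) < (n : ℝ) ^ q := by positivity
  calc ∫ x, ‖SK q ξ n f x‖ = (n : ℝ) ^ q * ∫ x, ‖∑' k, skTerm q ξ n f k x‖ := by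
        simp_rw [SK_eq_tsum_skTerm, norm_mul, Real.norm_of_nonneg hnq.le, integral_const_mul]
    _ ≤ (n : ℝ) ^ q * ∑' k, ∫ x, ‖skTerm q ξ n f k x‖ := by
        gcongr
        exact integral_norm_tsum_le_tsum_integral_norm (integrable_skTerm hξ hn)
          (summable_integral_norm_skTerm hn hf)
    _ ≤ (n : ℝ) ^ q * (((n : ℝ) ^ q)⁻¹ * (∫ y, ‖ξ y‖) * ∫ x, ‖f x‖) := by
        gcongr
        exact tsum_integral_norm_skTerm_le hn hf
    _ = (∫ x, ‖ξ x‖) * ∫ x, ‖f x‖ := by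
        rw [← mul_assoc, ← mul_assoc, mul_inv_cancel₀ hnq.ne', one_mul]

end SamplingKantorovich

theorem SK_L1_bound_general (q : ℕ)
    (ξ : EuclideanSpace ℝ (Fin q) → ℝ) (hξ : Integrable ξ)
    (n : ℕ) (hn : 1 ≤ n)
    (g : EuclideanSpace ℝ (Fin q) → ℝ) (hg : Integrable g) :
    Integrable (SK q ξ n g) ∧
      (∫ x : EuclideanSpace ℝ (Fin q), |SK q ξ n g x|)
        ≤ (∫ x : EuclideanSpace ℝ (Fin q), |ξ x|)
            * ∫ x : EuclideanSpace ℝ (Fin q), |g x| := by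
  simp_rw [← Real.norm_eq_abs]
  exact ⟨integrable_SK hξ hn hg, integral_norm_SK_le hξ hn hg⟩

/-- `S_n(g) ∈ L¹(ℝ^q)` with `‖S_n(g)‖₁ ≤ ‖ξ‖₁ ‖g‖₁`, the constant `‖ξ‖₁`
depending only on the kernel. -/
theorem SK_L1_bound (q : ℕ) (hq : 1 ≤ q)
    (ξ : EuclideanSpace ℝ (Fin q) → ℝ) (hmeas : Measurable ξ) (hξ : Integrable ξ)
    (n : ℕ) (hn : 1 ≤ n)
    (g : EuclideanSpace ℝ (Fin q) → ℝ) (hg : Integrable g) :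
    Integrable (SK q ξ n g) ∧
      (∫ x : EuclideanSpace ℝ (Fin q), |SK q ξ n g x|)
        ≤ (∫ x : EuclideanSpace ℝ (Fin q), |ξ x|)
            * ∫ x : EuclideanSpace ℝ (Fin q), |g x| :=
  SK_L1_bound_general q ξ hξ n hn g hg
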